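/- arXiv:1501.00597 — 4 statements merged into one kernel-verified Lean document; each statement's English description precedes it below -/
import Mathlib

section
/- Let 𝓕 be a family of density sets (𝓕 ⊆ 𝒟) that is closed under finite intersections. Then there exists a collection Σ of ~-equivalence classes of density sets with 𝓕/~ ⊆ Σ such that: [ℕ] ∈ Σ; for all [A], [B] ∈ Σ the classes [A ∩ B], [A ∪ B] and [ℕ ∖ A] are classes of density sets and belong to Σ, and with these operations Σ is a Boolean algebra (ordered by ⪯_𝒩); every ⪯_𝒩-increasing sequence in Σ has a least upper bound in 𝒟/~ which belongs to Σ; the map d̂ : Σ → [0,1], d̂([A]) = d(A), is well defined; and d̂ is σ-additive on Σ: for every sequence ([Aₙ]) ⊆ Σ with Aₙ ∩ Aₘ ∈ 𝒩 for all n ≠ m, the least upper bound [A] ∈ Σ of the classes of the finite unions A₁ ∪ … ∪ Aₙ satisfies d(A) = ∑ₙ d(Aₙ). -/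
/-- The counting sequence `n ↦ |A ∩ {1,…,n}| / n` of a set of natural numbers. -/
noncomputable def densSeq (A : Set ℕ) (n : ℕ) : ℝ :=
  (Nat.card ↥(A ∩ Set.Icc 1 n) : ℝ) / (n : ℝ)

/-- `A` has natural density `a`. -/
def HasDens (A : Set ℕ) (a : ℝ) : Prop :=
  Filter.Tendsto (densSeq A) Filter.atTop (nhds a)

/-- `A` is a density set, i.e. its natural density exists. -/
def IsDensitySet (A : Set ℕ) : Prop := ∃ a, HasDens A a

/-- `A` is a null density set. -/
def NullDens (A : Set ℕ) : Prop := HasDens A 0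

/-- The relation `A ⪯_𝒩 B`: there is a null density set `N` with `A ⊆ B ∪ N`. -/
def DensLE (A B : Set ℕ) : Prop := ∃ N, NullDens N ∧ A ⊆ B ∪ N


/-- `K ∼ M`: the symmetric difference of `K` and `M` has null density. -/
def EquivDens (K M : Set ℕ) : Prop := NullDens (symmDiff K M)

/-!
The indicators of the members of `F ∪ {ℕ}` form a multiplicative monoid (as `F` is closed under
intersections), so their span is a subalgebra of `ℕ → ℝ`; it lies in the subspace of
Cesàro-convergent sequences and contains the indicator of every set of the Boolean algebra generated
by `F`, which therefore consists of density sets. `Σ` is the closure of this algebra for the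
pseudometric "upper density of the symmetric difference". If `W k` is a nested sequence with
densities `d k → s`, then `B = {m | m ∈ W (κ m)}`, for a sufficiently slowly growing `κ`, has
density `s` and contains every `W k` up to finitely many points; this makes `B` the supremum of the
`W k` modulo null sets, and applying it to partial unions gives both σ-completeness and
σ-additivity.
-/

open Filter Set Topology MeasureTheory

lemma densSeq_eq_sum (A : Set ℕ) (n : ℕ) :
    densSeq A n = (∑ i ∈ Finset.Icc 1 n, A.indicator 1 i) / n := by
  classical
  have hA : A ∩ Icc 1 n = ↑({i ∈ Finset.Icc 1 n | i ∈ A}) := by ext; simp; tauto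
  rw [densSeq, hA, Nat.card_coe_set_eq, ncard_coe_finset, Finset.card_filter]
  push_cast
  simp only [indicator_apply, Pi.one_apply]

@[simp]
lemma densSeq_empty (n : ℕ) : densSeq ∅ n = 0 := by
  simp [densSeq]

lemma densSeq_nonneg (A : Set ℕ) (n : ℕ) : 0 ≤ densSeq A n := by
  rw [densSeq]; positivity

lemma densSeq_le_of_inter_subset {A B : Set ℕ} {n : ℕ} (h : A ∩ Icc 1 n ⊆ B) :
    densSeq A n ≤ densSeq B n := by
  rw [densSeq_eq_sum, densSeq_eq_sum]
  refine div_le_div_of_nonneg_right (Finset.sum_le_sum fun i hi => ?_) (Nat.cast_nonneg n)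
  by_cases hiA : i ∈ A
  · simp [hiA, h ⟨hiA, by simpa using hi⟩]
  · simp [hiA, indicator_nonneg]

lemma densSeq_mono {A B : Set ℕ} (h : A ⊆ B) (n : ℕ) : densSeq A n ≤ densSeq B n :=
  densSeq_le_of_inter_subset (inter_subset_left.trans h)

lemma densSeq_union_add_inter (A B : Set ℕ) (n : ℕ) :
    densSeq (A ∪ B) n + densSeq (A ∩ B) n = densSeq A n + densSeq B n := by
  simp only [densSeq_eq_sum, ← add_div, ← Finset.sum_add_distrib]
  congr 1
  exact Finset.sum_congr rfl fun i _ => congrFun (indicator_union_add_inter 1 A B) i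

lemma densSeq_union_le (A B : Set ℕ) (n : ℕ) : densSeq (A ∪ B) n ≤ densSeq A n + densSeq B n := by
  linarith [densSeq_union_add_inter A B n, densSeq_nonneg (A ∩ B) n]

lemma densSeq_diff_add_inter (A B : Set ℕ) (n : ℕ) :
    densSeq (A \ B) n + densSeq (A ∩ B) n = densSeq A n := by
  have h := densSeq_union_add_inter (A \ B) (A ∩ B) n
  rw [sdiff_union_inter, disjoint_sdiff_inter.inter_eq, densSeq_empty, add_zero] at h
  exact h.symm

lemma abs_densSeq_sub_le (A B : Set ℕ) (n : ℕ) :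
    |densSeq A n - densSeq B n| ≤ densSeq (symmDiff A B) n := by
  have hA := (densSeq_mono (le_symmDiff_sup_right A B) n).trans (densSeq_union_le _ B n)
  have hB := (densSeq_mono (le_symmDiff_sup_left A B) n).trans (densSeq_union_le _ A n)
  rw [abs_sub_le_iff]
  constructor <;> linarith

lemma densSeq_univ (n : ℕ) : densSeq univ n = n / n := by
  simp [densSeq]

lemma densSeq_le_one (A : Set ℕ) (n : ℕ) : densSeq A n ≤ 1 :=
  (densSeq_mono (subset_univ A) n).trans ((densSeq_univ n).trans_le (div_self_le_one _))

section Density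

variable {A B C : Set ℕ} {a b c : ℝ}

lemma HasDens.nonneg (hA : HasDens A a) : 0 ≤ a :=
  ge_of_tendsto hA (Eventually.of_forall (densSeq_nonneg A))

lemma HasDens.le_one (hA : HasDens A a) : a ≤ 1 :=
  le_of_tendsto hA (Eventually.of_forall (densSeq_le_one A))

lemma HasDens.le_of_subset (hA : HasDens A a) (hB : HasDens B b) (h : A ⊆ B) : a ≤ b :=
  le_of_tendsto_of_tendsto' hA hB (densSeq_mono h)

lemma HasDens.union_add_inter (hA : HasDens A a) (hB : HasDens B b) (hAB : HasDens (A ∩ B) c) :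
    HasDens (A ∪ B) (a + b - c) :=
  ((hA.add hB).sub hAB).congr fun n => by linarith [densSeq_union_add_inter A B n]

lemma HasDens.diff (hA : HasDens A a) (hAB : HasDens (A ∩ B) c) : HasDens (A \ B) (a - c) :=
  (hA.sub hAB).congr fun n => by linarith [densSeq_diff_add_inter A B n]

lemma HasDens.congr_equivDens (hA : HasDens A a) (h : EquivDens A B) : HasDens B a := by
  have hclose (n : ℕ) : ‖densSeq B n - densSeq A n‖ ≤ densSeq (symmDiff A B) n := by
    simpa [symmDiff_comm] using abs_densSeq_sub_le B A n
  have hBA := (squeeze_zero_norm hclose h).add hA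
  simp only [sub_add_cancel, zero_add] at hBA
  exact hBA

lemma hasDens_univ : HasDens univ 1 :=
  tendsto_const_nhds.congr' <| by
    filter_upwards [eventually_ge_atTop 1] with n hn
    rw [densSeq_univ, div_self (by positivity)]

lemma Set.Finite.nullDens (hA : A.Finite) : NullDens A := by
  refine squeeze_zero (densSeq_nonneg A) (fun n => ?_)
    (tendsto_const_div_atTop_nhds_zero_nat (A.ncard : ℝ))
  rw [densSeq, Nat.card_coe_set_eq]
  exact div_le_div_of_nonneg_right (mod_cast ncard_le_ncard inter_subset_left hA)
    (Nat.cast_nonneg n)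

lemma NullDens.mono (hB : NullDens B) (h : A ⊆ B) : NullDens A :=
  squeeze_zero (densSeq_nonneg A) (densSeq_mono h) hB

lemma NullDens.union (hA : NullDens A) (hB : NullDens B) : NullDens (A ∪ B) :=
  squeeze_zero (densSeq_nonneg _) (densSeq_union_le A B) (by simpa using hA.add hB)

lemma NullDens.biUnion_finset {ι : Type*} {s : Finset ι} {A : ι → Set ℕ}
    (h : ∀ i ∈ s, NullDens (A i)) : NullDens (⋃ i ∈ s, A i) := by
  classical
  induction s using Finset.induction_on with
  | empty => simpa using finite_empty.nullDens
  | insert j s _ ih =>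
    rw [Finset.set_biUnion_insert]
    exact (h j (Finset.mem_insert_self j s)).union
      (ih fun i hi => h i (Finset.mem_insert_of_mem hi))

lemma nullDens_of_forall_eventually_lt (h : ∀ ε > 0, ∀ᶠ n in atTop, densSeq A n < ε) :
    NullDens A :=
  tendsto_order.2 ⟨fun _ hε => Eventually.of_forall fun n => hε.trans_le (densSeq_nonneg A n), h⟩

lemma hasDens_biUnion_finset {ι : Type*} [DecidableEq ι] {s : Finset ι} {A : ι → Set ℕ}
    {a : ι → ℝ} (ha : ∀ i ∈ s, HasDens (A i) (a i))
    (hdisj : ∀ i ∈ s, ∀ j ∈ s, i ≠ j → NullDens (A i ∩ A j)) :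
    HasDens (⋃ i ∈ s, A i) (∑ i ∈ s, a i) := by
  induction s using Finset.induction_on with
  | empty => simpa [NullDens] using finite_empty.nullDens
  | insert j s hj ih =>
    have hs : ∀ i ∈ s, i ∈ insert j s := fun i hi => Finset.mem_insert_of_mem hi
    have hinter : NullDens (A j ∩ ⋃ i ∈ s, A i) := by
      rw [inter_iUnion₂]
      exact NullDens.biUnion_finset fun i hi => hdisj j (Finset.mem_insert_self j s) i (hs i hi)
        (ne_of_mem_of_not_mem hi hj).symm
    rw [Finset.set_biUnion_insert, Finset.sum_insert hj]
    simpa using (ha j (Finset.mem_insert_self j s)).union_add_inter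
      (ih (fun i hi => ha i (hs i hi)) fun i hi k hk => hdisj i (hs i hi) k (hs k hk)) hinter

lemma densLE_iff_nullDens_diff : DensLE A B ↔ NullDens (A \ B) :=
  ⟨fun ⟨_, hN, hsub⟩ => hN.mono fun _ hx => (hsub hx.1).resolve_left hx.2,
    fun h => ⟨A \ B, h, fun _ hx => or_iff_not_imp_left.2 fun hxB => ⟨hx, hxB⟩⟩⟩

lemma densLE_of_subset (h : A ⊆ B) : DensLE A B :=
  ⟨∅, finite_empty.nullDens, by simpa using h⟩

lemma DensLE.mono_left (h : DensLE B C) (hAB : A ⊆ B) : DensLE A C :=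
  let ⟨N, hN, hsub⟩ := h
  ⟨N, hN, hAB.trans hsub⟩

lemma DensLE.inter (hB : DensLE A B) (hC : DensLE A C) : DensLE A (B ∩ C) := by
  rw [densLE_iff_nullDens_diff, sdiff_inter] at *
  exact hB.union hC

lemma DensLE.union (hA : DensLE A C) (hB : DensLE B C) : DensLE (A ∪ B) C := by
  rw [densLE_iff_nullDens_diff, union_sdiff_distrib] at *
  exact hA.union hB

lemma densLE_biUnion_finset {ι : Type*} {s : Finset ι} {A : ι → Set ℕ}
    (h : ∀ i ∈ s, DensLE (A i) C) : DensLE (⋃ i ∈ s, A i) C := by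
  simp only [densLE_iff_nullDens_diff, iUnion_sdiff] at *
  exact NullDens.biUnion_finset h

end Density

def cesaroConvergent : Submodule ℝ (ℕ → ℝ) where
  carrier := {f | ∃ a, Tendsto (fun n : ℕ => (∑ i ∈ Finset.Icc 1 n, f i) / n) atTop (𝓝 a)}
  add_mem' := fun ⟨a, ha⟩ ⟨b, hb⟩ =>
    ⟨a + b, by simpa [Finset.sum_add_distrib, add_div] using ha.add hb⟩
  zero_mem' := ⟨0, by simp⟩
  smul_mem' c _ := fun ⟨a, ha⟩ =>
    ⟨c * a, by simpa [← Finset.mul_sum, mul_div_assoc] using ha.const_mul c⟩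

lemma isDensitySet_iff_indicator_mem {A : Set ℕ} :
    IsDensitySet A ↔ A.indicator 1 ∈ cesaroConvergent := by
  simp only [IsDensitySet, HasDens, funext (densSeq_eq_sum A)]
  rfl

lemma isSetAlgebra_setOf_indicator_mem {α R : Type*} [CommRing R]
    (𝒜 : Subalgebra R (α → R)) : IsSetAlgebra {X : Set α | X.indicator 1 ∈ 𝒜} where
  empty_mem := by rw [mem_ofPred_eq, indicator_empty]; exact zero_mem 𝒜
  compl_mem X hX := by simpa [indicator_compl] using sub_mem (one_mem 𝒜) hX
  union_mem X Y hX hY := by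
    rw [mem_ofPred_eq, eq_sub_of_add_eq (indicator_union_add_inter (1 : α → R) X Y),
      inter_indicator_one]
    exact sub_mem (add_mem hX hY) (mul_mem hX hY)

theorem isDensitySet_of_mem_generateSetAlgebra {F : Set (Set ℕ)}
    (hFdens : ∀ A ∈ F, IsDensitySet A) (hFinter : ∀ A ∈ F, ∀ B ∈ F, A ∩ B ∈ F) {A : Set ℕ}
    (hA : A ∈ generateSetAlgebra F) : IsDensitySet A := by
  let M : Submonoid (ℕ → ℝ) :=
    { carrier := (fun A => A.indicator 1) '' insert univ F
      mul_mem' := by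
        rintro _ _ ⟨A, hA, rfl⟩ ⟨B, hB, rfl⟩
        refine ⟨A ∩ B, ?_, inter_indicator_one⟩
        rcases hA with rfl | hA <;> rcases hB with rfl | hB
        all_goals simp_all
      one_mem' := ⟨univ, mem_insert _ _, indicator_univ 1⟩ }
  have hM : Subalgebra.toSubmodule (Algebra.adjoin ℝ (M : Set (ℕ → ℝ))) =
      Submodule.span ℝ (M : Set (ℕ → ℝ)) :=
    Algebra.adjoin_eq_span_of_subset ℝ (by rw [Submonoid.closure_eq]; exact Submodule.subset_span)
  have hMdens : Submodule.span ℝ (M : Set (ℕ → ℝ)) ≤ cesaroConvergent := by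
    rw [Submodule.span_le]
    rintro _ ⟨A, hA, rfl⟩
    rcases hA with rfl | hA
    exacts [isDensitySet_iff_indicator_mem.1 ⟨1, hasDens_univ⟩,
      isDensitySet_iff_indicator_mem.1 (hFdens A hA)]
  have hF𝒜 : F ⊆ {X : Set ℕ | X.indicator 1 ∈ Algebra.adjoin ℝ (M : Set (ℕ → ℝ))} :=
    fun B hB => Algebra.subset_adjoin ⟨B, mem_insert_of_mem _ hB, rfl⟩
  have hAM := (isSetAlgebra_setOf_indicator_mem _).generateSetAlgebra_subset hF𝒜 hA
  exact isDensitySet_iff_indicator_mem.2 (hMdens (hM ▸ hAM))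

lemma cauchySeq_of_forall_eventually_dist_lt {α : Type*} [PseudoMetricSpace α] {f : ℕ → α}
    (h : ∀ ε > 0, ∃ g : ℕ → α, CauchySeq g ∧ ∀ᶠ n in atTop, dist (f n) (g n) < ε) :
    CauchySeq f := by
  refine Metric.cauchySeq_iff.2 fun ε hε => ?_
  obtain ⟨g, hg, hfg⟩ := h (ε / 3) (by positivity)
  obtain ⟨N₁, hN₁⟩ := Metric.cauchySeq_iff.1 hg (ε / 3) (by positivity)
  obtain ⟨N₂, hN₂⟩ := eventually_atTop.1 hfg
  refine ⟨max N₁ N₂, fun m hm n hn => ?_⟩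
  have := dist_triangle4 (f m) (g m) (g n) (f n)
  have := hN₁ m (le_of_max_le_left hm) n (le_of_max_le_left hn)
  have := hN₂ m (le_of_max_le_right hm)
  have := hN₂ n (le_of_max_le_right hn)
  rw [dist_comm (g n)] at *
  linarith

lemma exists_monotone_tendsto_atTop_eventually {P : ℕ → ℕ → Prop}
    (h : ∀ k, ∀ᶠ n in atTop, P k n) :
    ∃ κ : ℕ → ℕ, Monotone κ ∧ Tendsto κ atTop atTop ∧ ∀ᶠ n in atTop, P (κ n) n := by
  classical
  obtain ⟨φ, hφ, hP⟩ :=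
    extraction_forall_of_eventually fun k => eventually_forall_ge_atTop.2 (h k)
  refine ⟨fun n => Nat.findGreatest (fun k => φ k ≤ n) n,
    fun m n hmn => Nat.findGreatest_mono (fun k hk => hk.trans hmn) hmn,
    tendsto_atTop.2 fun k => ?_, ?_⟩
  · filter_upwards [eventually_ge_atTop (φ k)] with n hn
    exact Nat.le_findGreatest ((hφ.id_le k).trans hn) hn
  · filter_upwards [eventually_ge_atTop (φ 0)] with n hn
    exact hP _ n (Nat.findGreatest_spec (P := fun k => φ k ≤ n) (Nat.zero_le n) hn)

theorem exists_hasDens_of_monotone {W : ℕ → Set ℕ} (hW : Monotone W) {d : ℕ → ℝ}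
    (hd : ∀ k, HasDens (W k) (d k)) {s : ℝ} (hs : Tendsto d atTop (𝓝 s)) :
    ∃ B, HasDens B s ∧ ∀ k, (W k \ B).Finite := by
  have hds : ∀ k, d k ≤ s :=
    Monotone.ge_of_tendsto (fun j k hjk => (hd j).le_of_subset (hd k) (hW hjk)) hs
  -- `κ` grows so slowly that at time `n` the set `W (κ n)` already has nearly its density.
  obtain ⟨κ, hκ_mono, hκ, hκW⟩ := exists_monotone_tendsto_atTop_eventually
    (P := fun k n => densSeq (W k) n < s + 1 / ((k : ℝ) + 1))
    fun k => (hd k).eventually_lt_const (lt_add_of_le_of_pos (hds k) (by positivity))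
  set B := {m | m ∈ W (κ m)}
  have hfin (k : ℕ) : (W k \ B).Finite := by
    obtain ⟨N, hN⟩ := eventually_atTop.1 (tendsto_atTop.1 hκ k)
    exact (finite_lt_nat N).subset fun m hm => lt_of_not_ge fun hmN => hm.2 (hW (hN m hmN) hm.1)
  refine ⟨B, tendsto_order.2 ⟨fun u hu => ?_, fun u hu => ?_⟩, hfin⟩
  · obtain ⟨k, hk⟩ := (hs.eventually_const_lt hu).exists
    have hWB : Tendsto (fun n => densSeq (W k) n - densSeq (W k \ B) n) atTop (𝓝 (d k)) := by
      simpa using (hd k).sub (hfin k).nullDens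
    filter_upwards [hWB.eventually_const_lt hk] with n hn
    have : densSeq (W k) n ≤ densSeq B n + densSeq (W k \ B) n :=
      (densSeq_mono le_sup_sdiff n).trans (densSeq_union_le _ _ n)
    linarith
  · have hsmall : ∀ᶠ n in atTop, 1 / ((κ n : ℝ) + 1) < u - s :=
      ((tendsto_one_div_add_atTop_nhds_zero_nat).comp hκ).eventually_lt_const (by linarith)
    filter_upwards [hκW, hsmall] with n hWn hn
    calc densSeq B n ≤ densSeq (W (κ n)) n :=
          densSeq_le_of_inter_subset fun m hm => hW (hκ_mono hm.2.2) hm.1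
      _ < u := by linarith

section DensityClosure

/-- The closure of a family of sets for the pseudometric `(A, B) ↦ d*(A ∆ B)`, where `d*` is the
upper density. -/
def densityClosure (𝒜 : Set (Set ℕ)) : Set (Set ℕ) :=
  {B | ∀ ε > 0, ∃ A ∈ 𝒜, ∀ᶠ n in atTop, densSeq (symmDiff A B) n < ε}

variable {𝒜 : Set (Set ℕ)} {A B : Set ℕ}

lemma subset_densityClosure : 𝒜 ⊆ densityClosure 𝒜 :=
  fun A hA ε hε => ⟨A, hA, Eventually.of_forall fun n => by simpa using hε⟩

lemma mem_densityClosure_of_approx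
    (h : ∀ ε > 0, ∃ W ∈ densityClosure 𝒜, ∀ᶠ n in atTop, densSeq (symmDiff W B) n < ε) :
    B ∈ densityClosure 𝒜 := by
  intro ε hε
  obtain ⟨W, hW, hWB⟩ := h (ε / 2) (by positivity)
  obtain ⟨A, hA, hAW⟩ := hW (ε / 2) (by positivity)
  refine ⟨A, hA, ?_⟩
  filter_upwards [hAW, hWB] with n h₁ h₂
  have := (densSeq_mono (symmDiff_triangle A W B) n).trans (densSeq_union_le _ _ n)
  linarith

lemma mem_densityClosure_of_equivDens (hA : A ∈ densityClosure 𝒜) (h : EquivDens A B) :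
    B ∈ densityClosure 𝒜 :=
  mem_densityClosure_of_approx fun _ hε => ⟨A, hA, h.eventually_lt_const hε⟩

lemma isSetAlgebra_densityClosure (h𝒜 : IsSetAlgebra 𝒜) : IsSetAlgebra (densityClosure 𝒜) where
  empty_mem := subset_densityClosure h𝒜.empty_mem
  compl_mem B hB ε hε :=
    let ⟨A, hA, hAB⟩ := hB ε hε
    ⟨Aᶜ, h𝒜.compl_mem hA, by simpa only [compl_symmDiff_compl] using hAB⟩
  union_mem B B' hB hB' ε hε := by
    obtain ⟨A, hA, hAB⟩ := hB (ε / 2) (by positivity)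
    obtain ⟨A', hA', hAB'⟩ := hB' (ε / 2) (by positivity)
    refine ⟨A ∪ A', h𝒜.union_mem hA hA', ?_⟩
    filter_upwards [hAB, hAB'] with n h₁ h₂
    exact ((densSeq_mono union_symmDiff_union_subset n).trans (densSeq_union_le _ _ n)).trans_lt
      (by linarith)

lemma isDensitySet_of_mem_densityClosure (h𝒜 : ∀ A ∈ 𝒜, IsDensitySet A)
    (hB : B ∈ densityClosure 𝒜) : IsDensitySet B := by
  refine cauchySeq_tendsto_of_complete (cauchySeq_of_forall_eventually_dist_lt fun ε hε => ?_)
  obtain ⟨A, hA, hAB⟩ := hB ε hε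
  obtain ⟨a, ha⟩ := h𝒜 A hA
  refine ⟨densSeq A, ha.cauchySeq, hAB.mono fun n hn => ?_⟩
  rw [Real.dist_eq, symmDiff_comm] at *
  exact (abs_densSeq_sub_le B A n).trans_lt hn

theorem exists_densLE_lub_mem_densityClosure_of_monotone {W : ℕ → Set ℕ} (hW : Monotone W)
    (hW𝒜 : ∀ k, W k ∈ densityClosure 𝒜) {d : ℕ → ℝ} (hd : ∀ k, HasDens (W k) (d k)) {s : ℝ}
    (hs : Tendsto d atTop (𝓝 s)) :
    ∃ B ∈ densityClosure 𝒜, HasDens B s ∧ (∀ k, DensLE (W k) B) ∧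
      ∀ C, (∀ k, DensLE (W k) C) → DensLE B C := by
  obtain ⟨B, hB, hfin⟩ := exists_hasDens_of_monotone hW hd hs
  have hBW (k : ℕ) : HasDens (B \ W k) (s - d k) := by
    refine hB.diff ((hd k).congr_equivDens ?_)
    rw [EquivDens, symmDiff_of_ge inter_subset_right, sdiff_inter_self_eq_sdiff]
    exact (hfin k).nullDens
  have hgap (ε : ℝ) (hε : 0 < ε) : ∃ k, s - d k < ε :=
    ((hs.const_sub s).eventually_lt_const (by simpa using hε)).exists
  refine ⟨B, mem_densityClosure_of_approx fun ε hε => ?_, hB,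
    fun k => densLE_iff_nullDens_diff.2 (hfin k).nullDens,
    fun C hC => densLE_iff_nullDens_diff.2 (nullDens_of_forall_eventually_lt fun ε hε => ?_)⟩
  · obtain ⟨k, hk⟩ := hgap ε hε
    refine ⟨W k, hW𝒜 k, ?_⟩
    filter_upwards [((hfin k).nullDens.add (hBW k)).eventually_lt_const (by simpa using hk)]
      with n hn
    rw [Set.symmDiff_def]
    exact (densSeq_union_le _ _ n).trans_lt hn
  · obtain ⟨k, hk⟩ := hgap ε hε
    filter_upwards [((hBW k).add (densLE_iff_nullDens_diff.1 (hC k))).eventually_lt_const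
      (by simpa using hk)] with n hn
    exact ((densSeq_mono (sdiff_triangle B (W k) C) n).trans (densSeq_union_le _ _ n)).trans_lt hn

end DensityClosure

section PartialUnions

variable {𝒜 : Set (Set ℕ)} {A : ℕ → Set ℕ}

lemma monotone_biUnion_range (A : ℕ → Set ℕ) : Monotone fun n => ⋃ i ∈ Finset.range (n + 1), A i :=
  fun _ _ hmn => iUnion₂_subset fun _ hi =>
    Finset.subset_set_biUnion_of_mem (Finset.range_subset_range.2 (by omega) hi)

theorem exists_densLE_lub_mem_densityClosure (h𝒜 : IsSetAlgebra 𝒜) (h𝒜d : ∀ A ∈ 𝒜, IsDensitySet A)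
    (hA : ∀ n, A n ∈ densityClosure 𝒜) :
    ∃ B ∈ densityClosure 𝒜, (∀ n, DensLE (A n) B) ∧ ∀ C, (∀ n, DensLE (A n) C) → DensLE B C := by
  have hW𝒜 (n : ℕ) : ⋃ i ∈ Finset.range (n + 1), A i ∈ densityClosure 𝒜 :=
    (isSetAlgebra_densityClosure h𝒜).biUnion_mem _ fun i _ => hA i
  choose d hd using fun n => isDensitySet_of_mem_densityClosure h𝒜d (hW𝒜 n)
  have hd_mono : Monotone d := fun m n hmn =>
    (hd m).le_of_subset (hd n) (monotone_biUnion_range A hmn)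
  have hd_bdd : BddAbove (range d) := ⟨1, forall_mem_range.2 fun n => (hd n).le_one⟩
  obtain ⟨B, hB, -, hWB, hBleast⟩ := exists_densLE_lub_mem_densityClosure_of_monotone
    (monotone_biUnion_range A) hW𝒜 hd (tendsto_atTop_ciSup hd_mono hd_bdd)
  refine ⟨B, hB, fun n => (hWB n).mono_left ?_,
    fun C hC => hBleast C fun n => densLE_biUnion_finset fun i _ => hC i⟩
  exact Finset.subset_set_biUnion_of_mem (Finset.self_mem_range_succ n)

theorem exists_hasDens_tsum_densLE_lub_mem_densityClosure (h𝒜 : IsSetAlgebra 𝒜)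
    (hA : ∀ n, A n ∈ densityClosure 𝒜) {a : ℕ → ℝ} (ha : ∀ n, HasDens (A n) (a n))
    (hdisj : ∀ n m, n ≠ m → NullDens (A n ∩ A m)) :
    ∃ B ∈ densityClosure 𝒜,
      (∀ n, DensLE (⋃ i ∈ Finset.range (n + 1), A i) B) ∧
      (∀ C, (∀ n, DensLE (⋃ i ∈ Finset.range (n + 1), A i) C) → DensLE B C) ∧
      HasDens B (∑' n, a n) := by
  have hW (n : ℕ) : HasDens (⋃ i ∈ Finset.range (n + 1), A i) (∑ i ∈ Finset.range (n + 1), a i) :=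
    hasDens_biUnion_finset (fun i _ => ha i) fun i _ j _ hij => hdisj i j hij
  have ha_summable : Summable a := by
    refine summable_of_sum_range_le (fun n => (ha n).nonneg) (c := 1) fun n => ?_
    cases n with
    | zero => simp
    | succ n => exact (hW n).le_one
  obtain ⟨B, hB, hBa, hWB, hBleast⟩ := exists_densLE_lub_mem_densityClosure_of_monotone
    (monotone_biUnion_range A) (fun n => (isSetAlgebra_densityClosure h𝒜).biUnion_mem _
      fun i _ => hA i) hW (ha_summable.hasSum.tendsto_sum_nat.comp (tendsto_add_atTop_nat 1))
  exact ⟨B, hB, hWB, hBleast, hBa⟩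

end PartialUnions

/-- **Theorem 1, first part.** If `𝓕` is a family of density sets closed
under finite intersections, then there is a collection `Σ` of density sets — saturated
under `∼`, so that it represents a collection of `∼`-equivalence classes containing
`𝓕/∼` — which contains `[ℕ]`, is closed under intersections, unions and complements,
forms a Boolean algebra under the order `⪯_𝒩` (meets, joins and complements of classes
are computed by `∩`, `∪`, `ℕ ∖ ·`, and distributivity holds), in which every
`⪯_𝒩`-increasing sequence has a least upper bound in `𝒟/∼` belonging to `Σ`, on which
`d̂([A]) = d(A)` is well defined, and on which `d̂` is `σ`-additive: for every sequence of
members of `Σ` with pairwise null-density intersections, the least upper bound of the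
classes of the finite unions exists in `Σ` and its density is `∑ₙ d(Aₙ)`. -/
theorem density_sigma_algebra_extension (F : Set (Set ℕ))
    (hFdens : ∀ A ∈ F, IsDensitySet A)
    (hFinter : ∀ A ∈ F, ∀ B ∈ F, A ∩ B ∈ F) :
    ∃ S : Set (Set ℕ),
      -- `S` consists of density sets and is saturated under `∼` (a set of classes)
      (∀ A ∈ S, IsDensitySet A) ∧
      (∀ A ∈ S, ∀ B, IsDensitySet B → EquivDens A B → B ∈ S) ∧
      -- `𝓕/∼ ⊆ Σ`
      F ⊆ S ∧
      -- `[ℕ] ∈ Σ`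
      Set.univ ∈ S ∧
      -- closure under the Boolean operations, whose results are density sets
      (∀ A ∈ S, ∀ B ∈ S, IsDensitySet (A ∩ B) ∧ A ∩ B ∈ S) ∧
      (∀ A ∈ S, ∀ B ∈ S, IsDensitySet (A ∪ B) ∧ A ∪ B ∈ S) ∧
      (∀ A ∈ S, IsDensitySet (Set.univ \ A) ∧ Set.univ \ A ∈ S) ∧
      -- with these operations `Σ` is a Boolean algebra ordered by `⪯_𝒩`:
      -- `∩` is the infimum and `∪` the supremum of classes,
      (∀ A ∈ S, ∀ B ∈ S, DensLE (A ∩ B) A ∧ DensLE (A ∩ B) B ∧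
        ∀ C ∈ S, DensLE C A → DensLE C B → DensLE C (A ∩ B)) ∧
      (∀ A ∈ S, ∀ B ∈ S, DensLE A (A ∪ B) ∧ DensLE B (A ∪ B) ∧
        ∀ C ∈ S, DensLE A C → DensLE B C → DensLE (A ∪ B) C) ∧
      -- `ℕ ∖ A` is a complement of `A` modulo `𝒩`,
      (∀ A ∈ S, NullDens (A ∩ (Set.univ \ A)) ∧ DensLE Set.univ (A ∪ (Set.univ \ A))) ∧
      -- and the lattice operations distribute,
      (∀ A ∈ S, ∀ B ∈ S, ∀ C ∈ S, A ∩ (B ∪ C) = (A ∩ B) ∪ (A ∩ C)) ∧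
      -- every `⪯_𝒩`-increasing sequence in `Σ` has a least upper bound in `𝒟/∼`
      -- which belongs to `Σ`
      (∀ A : ℕ → Set ℕ, (∀ n, A n ∈ S) → (∀ n, DensLE (A n) (A (n + 1))) →
        ∃ B ∈ S, (∀ n, DensLE (A n) B) ∧
          ∀ C : Set ℕ, IsDensitySet C → (∀ n, DensLE (A n) C) → DensLE B C) ∧
      -- `d̂ : Σ → [0,1]`, `d̂([A]) = d(A)`, is well defined
      (∀ A ∈ S, ∀ B ∈ S, EquivDens A B →
        ∀ a b : ℝ, HasDens A a → HasDens B b → a = b) ∧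
      (∀ A ∈ S, ∀ a : ℝ, HasDens A a → 0 ≤ a ∧ a ≤ 1) ∧
      -- `d̂` is `σ`-additive on `Σ`
      (∀ A : ℕ → Set ℕ, ∀ a : ℕ → ℝ,
        (∀ n, A n ∈ S) → (∀ n, HasDens (A n) (a n)) →
        (∀ n m, n ≠ m → NullDens (A n ∩ A m)) →
        ∃ B ∈ S,
          (∀ n, DensLE (⋃ i ∈ Finset.range (n + 1), A i) B) ∧
          (∀ C : Set ℕ, IsDensitySet C →
            (∀ n, DensLE (⋃ i ∈ Finset.range (n + 1), A i) C) → DensLE B C) ∧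
          HasDens B (∑' n, a n)) := by
  have h𝒜 := isSetAlgebra_generateSetAlgebra (𝒜 := F)
  have h𝒜d (A : Set ℕ) : A ∈ generateSetAlgebra F → IsDensitySet A :=
    isDensitySet_of_mem_generateSetAlgebra hFdens hFinter
  have hS := isSetAlgebra_densityClosure h𝒜
  have hSd (A : Set ℕ) : A ∈ densityClosure (generateSetAlgebra F) → IsDensitySet A :=
    isDensitySet_of_mem_densityClosure h𝒜d
  refine ⟨densityClosure (generateSetAlgebra F), hSd,
    fun A hA B _ hAB => mem_densityClosure_of_equivDens hA hAB,
    fun A hA => subset_densityClosure (self_subset_generateSetAlgebra hA), hS.univ_mem,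
    fun A hA B hB => ⟨hSd _ (hS.inter_mem hA hB), hS.inter_mem hA hB⟩,
    fun A hA B hB => ⟨hSd _ (hS.union_mem hA hB), hS.union_mem hA hB⟩,
    fun A hA => ?_,
    fun A _ B _ => ⟨densLE_of_subset inter_subset_left, densLE_of_subset inter_subset_right,
      fun _ _ => DensLE.inter⟩,
    fun A _ B _ => ⟨densLE_of_subset subset_union_left, densLE_of_subset subset_union_right,
      fun _ _ => DensLE.union⟩,
    fun A _ => ⟨by simpa [NullDens] using finite_empty.nullDens, densLE_of_subset (by simp)⟩,
    fun A _ B _ C _ => inter_union_distrib_left A B C,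
    fun A hA _ => ?_,
    fun A _ B _ hAB a b ha hb => tendsto_nhds_unique (ha.congr_equivDens hAB) hb,
    fun A _ a ha => ⟨ha.nonneg, ha.le_one⟩,
    fun A a hA ha hdisj => ?_⟩
  · rw [← compl_eq_univ_sdiff]
    exact ⟨hSd _ (hS.compl_mem hA), hS.compl_mem hA⟩
  · obtain ⟨B, hB, hAB, hBleast⟩ := exists_densLE_lub_mem_densityClosure h𝒜 h𝒜d hA
    exact ⟨B, hB, hAB, fun C _ => hBleast C⟩
  · obtain ⟨B, hB, hAB, hBleast, hBa⟩ :=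
      exists_hasDens_tsum_densLE_lub_mem_densityClosure h𝒜 hA ha hdisj
    exact ⟨B, hB, hAB, fun C _ => hBleast C, hBa⟩
end

section
/- Let L be an orthomodular lattice and X = c₀₀(L)/Δ the associated quotient space. Then for all a, b ∈ ℝ and A, B ∈ L, the identity a ⊗ A + b ⊗ B = a ⊗ (A ∧ (A∧B)ᗮ) + (a+b) ⊗ (A∧B) + b ⊗ (B ∧ (A∧B)ᗮ) holds in X. -/
/-- The subspace `Δ ⊆ c₀₀(L)` spanned by `e_𝟬` and the vectors
`(e_A + e_B) − (e_{A∨B} + e_{A∧B})`. -/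
noncomputable def deltaSpan (L : Type*) [Lattice L] [BoundedOrder L] :
    Submodule ℝ (L →₀ ℝ) :=
  Submodule.span ℝ
    ({Finsupp.single (⊥ : L) (1 : ℝ)} ∪
      {f : L →₀ ℝ | ∃ A B : L,
        f = Finsupp.single A 1 + Finsupp.single B 1
          - (Finsupp.single (A ⊔ B) 1 + Finsupp.single (A ⊓ B) 1)})

/-- The quotient space `X = c₀₀(L)/Δ`. -/
abbrev XSpace (L : Type*) [Lattice L] [BoundedOrder L] :=
  (L →₀ ℝ) ⧸ deltaSpan L

/-- The element `a ⊗ A := q(a·e_A)` of `X`. -/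
noncomputable def tens (L : Type*) [Lattice L] [BoundedOrder L] (a : ℝ) (A : L) :
    XSpace L :=
  Submodule.Quotient.mk (Finsupp.single A a)


lemma tens_split {L : Type*} [Lattice L] [BoundedOrder L] {X Y : L}
    (h : X ⊓ Y = ⊥) (c : ℝ) :
    tens L c X + tens L c Y = tens L c (X ⊔ Y) := by
  unfold tens
  rw [← Submodule.Quotient.mk_add, Submodule.Quotient.eq]
  have hg : (Finsupp.single X 1 + Finsupp.single Y 1
      - (Finsupp.single (X ⊔ Y) 1 + Finsupp.single (X ⊓ Y) 1) : L →₀ ℝ) ∈ deltaSpan L :=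
    Submodule.subset_span (Or.inr ⟨X, Y, rfl⟩)
  have hb : (Finsupp.single (⊥ : L) (1 : ℝ)) ∈ deltaSpan L :=
    Submodule.subset_span (Or.inl rfl)
  have hm := Submodule.add_mem _ (Submodule.smul_mem _ c hg) (Submodule.smul_mem _ c hb)
  convert hm using 1
  rw [h]
  simp only [smul_sub, smul_add, Finsupp.smul_single', mul_one]
  abel

lemma tens_add_same {L : Type*} [Lattice L] [BoundedOrder L] (a b : ℝ) (A : L) :
    tens L a A + tens L b A = tens L (a + b) A := by
  unfold tens
  rw [← Submodule.Quotient.mk_add, ← Finsupp.single_add]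

/-- In the quotient space `X` over an orthomodular lattice `L`,
`a ⊗ A + b ⊗ B = a ⊗ (A ∧ (A∧B)ᗮ) + (a+b) ⊗ (A∧B) + b ⊗ (B ∧ (A∧B)ᗮ)`. -/
theorem tens_add_decomposition {L : Type*} [Lattice L] [BoundedOrder L]
    (compl : L → L)
    (hcompl_invol : ∀ x : L, compl (compl x) = x)
    (hcompl_anti : ∀ x y : L, x ≤ y → compl y ≤ compl x)
    (hcompl_inf : ∀ x : L, x ⊓ compl x = ⊥)
    (hcompl_sup : ∀ x : L, x ⊔ compl x = ⊤)
    (horthomodular : ∀ x y : L, x ≤ y → y = x ⊔ (y ⊓ compl x))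
    (a b : ℝ) (A B : L) :
    tens L a A + tens L b B =
      tens L a (A ⊓ compl (A ⊓ B)) + tens L (a + b) (A ⊓ B)
        + tens L b (B ⊓ compl (A ⊓ B)) := by
  have h1 : (A ⊓ B) ⊓ (A ⊓ compl (A ⊓ B)) = ⊥ := by
    apply le_antisymm _ bot_le
    exact le_trans (inf_le_inf_left _ inf_le_right) (le_of_eq (hcompl_inf _))
  have h2 : (A ⊓ B) ⊓ (B ⊓ compl (A ⊓ B)) = ⊥ := by
    apply le_antisymm _ bot_le
    exact le_trans (inf_le_inf_left _ inf_le_right) (le_of_eq (hcompl_inf _))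
  have hsA : (A ⊓ B) ⊔ (A ⊓ compl (A ⊓ B)) = A := (horthomodular _ _ inf_le_left).symm
  have hsB : (A ⊓ B) ⊔ (B ⊓ compl (A ⊓ B)) = B := (horthomodular _ _ inf_le_right).symm
  have eA := tens_split h1 a
  rw [hsA] at eA
  have eB := tens_split h2 b
  rw [hsB] at eB
  rw [← eA, ← eB, ← tens_add_same a b (A ⊓ B)]
  abel
end

section
/- Let L be an orthomodular lattice and X = c₀₀(L)/Δ the associated quotient space. Then every element x ∈ X can be represented as a finite sum x = ∑ᵢ aᵢ ⊗ Aᵢ with aᵢ ∈ ℝ, Aᵢ ∈ L and Aᵢ ∧ Aⱼ = 𝟬 for all i ≠ j. -/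
/-!
Every `a ⊗ ·` is a valuation on `L`, so `a ⊗ (E ⊔ D) = a ⊗ E + a ⊗ D` whenever `E ⊓ D = 𝟬`, and in an
orthomodular lattice `A ⊓ Eᗮ` is a complement of `E` in `[𝟬, A]` for every `E ≤ A`. To add `a ⊗ A` to
a disjoint family `(bᵢ, Bᵢ)`, split `A = E ⊔ D` and `B₀ = E ⊔ B₀'` along `E = A ⊓ B₀`; then
`a ⊗ A + b₀ ⊗ B₀ = (a + b₀) ⊗ E + b₀ ⊗ B₀' + a ⊗ D`, and `D` is merged recursively into the remaining
`Bᵢ`. Every new piece lies below `A` or below some `Bᵢ`, and `D ⊓ B₀' ≤ E ⊓ D = 𝟬`, so the family stays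
disjoint.
-/

section
open Function

variable {L : Type*} [Lattice L] [BoundedOrder L]

theorem tens_bot (a : ℝ) : tens L a ⊥ = 0 := by
  rw [tens, Submodule.Quotient.mk_eq_zero, ← mul_one a, ← smul_eq_mul, ← Finsupp.smul_single]
  exact Submodule.smul_mem _ a (Submodule.subset_span (Set.mem_union_left _ rfl))

theorem tens_add_left (a b : ℝ) (A : L) : tens L (a + b) A = tens L a A + tens L b A := by
  rw [tens, tens, tens, ← Submodule.Quotient.mk_add, Finsupp.single_add]

theorem tens_add_tens (a : ℝ) (A B : L) :
    tens L a A + tens L a B = tens L a (A ⊔ B) + tens L a (A ⊓ B) := by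
  rw [tens, tens, tens, tens, ← Submodule.Quotient.mk_add, ← Submodule.Quotient.mk_add,
    Submodule.Quotient.eq]
  have hsmul : Finsupp.single A a + Finsupp.single B a
      - (Finsupp.single (A ⊔ B) a + Finsupp.single (A ⊓ B) a)
      = a • (Finsupp.single A 1 + Finsupp.single B 1
          - (Finsupp.single (A ⊔ B) 1 + Finsupp.single (A ⊓ B) 1)) := by
    simp [smul_sub, smul_add, Finsupp.smul_single]
  rw [hsmul]
  exact Submodule.smul_mem _ a (Submodule.subset_span (Set.mem_union_right _ ⟨A, B, rfl⟩))

theorem tens_sup_of_disjoint (a : ℝ) {E D : L} (h : Disjoint E D) :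
    tens L a (E ⊔ D) = tens L a E + tens L a D := by
  rw [tens_add_tens, h.eq_bot, tens_bot, add_zero]

theorem exists_disjoint_sup_eq_of_orthomodular (compl : L → L)
    (hcompl_inf : ∀ x : L, x ⊓ compl x = ⊥)
    (horthomodular : ∀ x y : L, x ≤ y → y = x ⊔ (y ⊓ compl x)) {E A : L} (hEA : E ≤ A) :
    ∃ D, Disjoint E D ∧ E ⊔ D = A :=
  ⟨A ⊓ compl E, disjoint_iff.mpr (le_bot_iff.mp (hcompl_inf E ▸ inf_le_inf_left E inf_le_right)),
    (horthomodular E A hEA).symm⟩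

noncomputable def tensSum (l : List (ℝ × L)) : XSpace L :=
  (l.map fun p => tens L p.1 p.2).sum

@[simp]
theorem tensSum_cons (p : ℝ × L) (l : List (ℝ × L)) :
    tensSum (p :: l) = tens L p.1 p.2 + tensSum l := by
  simp [tensSum]

theorem disjoint_of_le_or_exists_le {X D P : L} {t : List (ℝ × L)} (hXD : Disjoint X D)
    (hXt : ∀ q ∈ t, Disjoint X q.2) (hP : P ≤ D ∨ ∃ q ∈ t, P ≤ q.2) : Disjoint X P := by
  rcases hP with hPD | ⟨q, hq, hPq⟩
  · exact hXD.mono_right hPD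
  · exact (hXt q hq).mono_right hPq

theorem exists_pairwise_disjoint_tensSum_eq_tens_add
    (hrel : ∀ E A : L, E ≤ A → ∃ D, Disjoint E D ∧ E ⊔ D = A) (a : ℝ) (A : L)
    {t : List (ℝ × L)} (ht : t.Pairwise (Disjoint on Prod.snd)) :
    ∃ l : List (ℝ × L), l.Pairwise (Disjoint on Prod.snd) ∧
      tensSum l = tens L a A + tensSum t ∧ ∀ p ∈ l, p.2 ≤ A ∨ ∃ q ∈ t, p.2 ≤ q.2 := by
  induction t generalizing A with
  | nil => exact ⟨[(a, A)], by simp, by simp, by simp⟩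
  | cons hd tl ih =>
    obtain ⟨b, B⟩ := hd
    obtain ⟨hBtl, htl⟩ := List.pairwise_cons.mp ht
    obtain ⟨D, hED, hA⟩ := hrel (A ⊓ B) A inf_le_left
    obtain ⟨B', hEB', hB⟩ := hrel (A ⊓ B) B inf_le_right
    obtain ⟨l, hl, hsum, hcover⟩ := ih D htl
    have hDA : D ≤ A := hA ▸ le_sup_right
    have hB'B : B' ≤ B := hB ▸ le_sup_right
    have hB'D : Disjoint B' D := disjoint_iff_inf_le.mpr <|
      le_trans (le_inf (le_inf (inf_le_right.trans hDA) (inf_le_left.trans hB'B)) inf_le_right)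
        (disjoint_iff_inf_le.mp hED)
    have hcover_l : ∀ p ∈ l, p.2 ≤ D ∨ ∃ q ∈ tl, p.2 ≤ q.2 := hcover
    refine ⟨(a + b, A ⊓ B) :: (b, B') :: l, ?_, ?_, ?_⟩
    · refine List.Pairwise.cons ?_ (List.Pairwise.cons ?_ hl)
      · rintro p (_ | ⟨_, hp⟩)
        · exact hEB'
        · exact disjoint_of_le_or_exists_le hED
            (fun q hq => (hBtl q hq).mono_left inf_le_right) (hcover_l p hp)
      · exact fun p hp => disjoint_of_le_or_exists_le hB'D
          (fun q hq => (hBtl q hq).mono_left hB'B) (hcover_l p hp)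
    · calc tensSum ((a + b, A ⊓ B) :: (b, B') :: l)
          = tens L a (A ⊓ B) + tens L a D + (tens L b (A ⊓ B) + tens L b B') + tensSum tl := by
            rw [tensSum_cons, tensSum_cons, hsum, tens_add_left]; abel
        _ = tens L a A + tensSum ((b, B) :: tl) := by
            rw [tensSum_cons, ← tens_sup_of_disjoint a hED, ← tens_sup_of_disjoint b hEB', hA, hB]
            abel
    · rintro p (_ | ⟨_, _ | ⟨_, hp⟩⟩)
      · exact Or.inr ⟨(b, B), List.mem_cons_self, inf_le_right⟩
      · exact Or.inr ⟨(b, B), List.mem_cons_self, hB'B⟩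
      · rcases hcover_l p hp with hpD | ⟨q, hq, hpq⟩
        · exact Or.inl (hpD.trans hDA)
        · exact Or.inr ⟨q, List.mem_cons_of_mem _ hq, hpq⟩

theorem exists_pairwise_disjoint_tensSum_eq_mk
    (hrel : ∀ E A : L, E ≤ A → ∃ D, Disjoint E D ∧ E ⊔ D = A) (f : L →₀ ℝ) :
    ∃ l : List (ℝ × L), l.Pairwise (Disjoint on Prod.snd) ∧
      tensSum l = Submodule.Quotient.mk (p := deltaSpan L) f := by
  induction f using Finsupp.induction with
  | zero => exact ⟨[], List.Pairwise.nil, rfl⟩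
  | single_add A a f _ _ ih =>
    obtain ⟨t, ht, hsum⟩ := ih
    obtain ⟨l, hl, hlsum, -⟩ := exists_pairwise_disjoint_tensSum_eq_tens_add hrel a A ht
    exact ⟨l, hl, by rw [hlsum, hsum, Submodule.Quotient.mk_add, tens]⟩

end

theorem exists_disjoint_representation_general {L : Type*} [Lattice L] [BoundedOrder L]
    (compl : L → L)
    (hcompl_inf : ∀ x : L, x ⊓ compl x = ⊥)
    (horthomodular : ∀ x y : L, x ≤ y → y = x ⊔ (y ⊓ compl x))
    (x : XSpace L) :
    ∃ (n : ℕ) (a : Fin n → ℝ) (A : Fin n → L),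
      x = ∑ i, tens L (a i) (A i) ∧ ∀ i j, i ≠ j → A i ⊓ A j = ⊥ := by
  obtain ⟨f, rfl⟩ := Submodule.Quotient.mk_surjective (deltaSpan L) x
  obtain ⟨l, hl, hsum⟩ := exists_pairwise_disjoint_tensSum_eq_mk
    (fun _ _ => exists_disjoint_sup_eq_of_orthomodular compl hcompl_inf horthomodular) f
  refine ⟨l.length, fun i => l[i.1].1, fun i => l[i.1].2, ?_, fun i j hij => ?_⟩
  · rw [← hsum, tensSum, ← Fin.sum_univ_fun_getElem]
  · rcases lt_or_gt_of_ne hij with h | h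
    · exact (List.pairwise_iff_getElem.mp hl i j i.2 j.2 h).eq_bot
    · exact (List.pairwise_iff_getElem.mp hl j i j.2 i.2 h).symm.eq_bot

/-- Over an orthomodular lattice `L`, every element of `X = c₀₀(L)/Δ`
can be written as a finite sum `∑ᵢ aᵢ ⊗ Aᵢ` with `Aᵢ ∧ Aⱼ = 𝟬` for `i ≠ j`. -/
theorem exists_disjoint_representation {L : Type*} [Lattice L] [BoundedOrder L]
    (compl : L → L)
    (hcompl_invol : ∀ x : L, compl (compl x) = x)
    (hcompl_anti : ∀ x y : L, x ≤ y → compl y ≤ compl x)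
    (hcompl_inf : ∀ x : L, x ⊓ compl x = ⊥)
    (hcompl_sup : ∀ x : L, x ⊔ compl x = ⊤)
    (horthomodular : ∀ x y : L, x ≤ y → y = x ⊔ (y ⊓ compl x))
    (x : XSpace L) :
    ∃ (n : ℕ) (a : Fin n → ℝ) (A : Fin n → L),
      x = ∑ i, tens L (a i) (A i) ∧ ∀ i j, i ≠ j → A i ⊓ A j = ⊥ :=
  exists_disjoint_representation_general compl hcompl_inf horthomodular x
end

section
/- Let L be a bounded lattice, φ : L → [0,1] order-preserving with φ(𝟬) = 0, φ(𝟭) = 1 and φ(A ∨ B) ≤ φ(A) + φ(B), and 1 ≤ p < ∞. Then the space L^p(L, φ) endowed with the relation ≤ defined via the closed positive cone C₊ is a partially ordered vector space (≤ is reflexive, transitive, antisymmetric, x ≤ y implies x + z ≤ y + z for all z, and 0 ≤ x implies 0 ≤ a·x for all a ≥ 0), and it has the property that 0 ≤ x ≤ y implies ‖x‖ ≤ ‖y‖. -/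
/-- The smallest preorder `⊑` on `X` that is translation invariant, invariant under
multiplication by positive scalars, and satisfies `a ⊗ A ⊑ b ⊗ A` for `a ≤ b` and
`1 ⊗ A ⊑ 1 ⊗ B` for `A ≤ B`. -/
inductive SqLe (L : Type*) [Lattice L] [BoundedOrder L] : XSpace L → XSpace L → Prop
  | refl (x : XSpace L) : SqLe L x x
  | trans {x y z : XSpace L} : SqLe L x y → SqLe L y z → SqLe L x z
  | add_right {x y : XSpace L} (z : XSpace L) : SqLe L x y → SqLe L (x + z) (y + z)
  | smul_pos {x y : XSpace L} (c : ℝ) : 0 < c → SqLe L x y → SqLe L (c • x) (c • y)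
  | coeff (a b : ℝ) (A : L) : a ≤ b → SqLe L (tens L a A) (tens L b A)
  | mono (A B : L) : A ≤ B → SqLe L (tens L 1 A) (tens L 1 B)

/-- The `L^p(L, φ)`-seminorm on `X`:
`‖x‖ = inf { (∑ₖ |bₖ|^p φ(Bₖ))^{1/p} : ±x ⊑ ∑ₖ |bₖ| ⊗ Bₖ }`,
the infimum taken over finite families `(bₖ) ⊆ ℝ`, `(Bₖ) ⊆ L`. -/
noncomputable def lpSeminorm (L : Type*) [Lattice L] [BoundedOrder L]
    (φ : L → ℝ) (p : ℝ) (x : XSpace L) : ℝ :=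
  sInf {r : ℝ | ∃ (n : ℕ) (b : Fin n → ℝ) (B : Fin n → L),
    SqLe L x (∑ k, tens L |b k| (B k)) ∧
    SqLe L (-x) (∑ k, tens L |b k| (B k)) ∧
    r = (∑ k, |b k| ^ p * φ (B k)) ^ (1 / p)}

/-! Since `⊑` is compatible with `+` and positive scalars, the elements `0 ⊑ x` form a pointed
cone in `X`; its image under `j` and the closure of that image are then pointed cones in `E`,
which gives reflexivity, transitivity and compatibility with `+` and `•`. If `0 ⊑ x ⊑ y`, every
majorant `∑ |bₖ| ⊗ Bₖ` of `±y` is also one of `±x`, so the seminorm is monotone on the positive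
cone of `X`. The inequality `‖u‖ ≤ ‖u + w‖` is a closed condition on `(u, w)`, so it extends to
`C₊ × C₊`; with `u = y - x`, `w = x - y` it gives antisymmetry. -/

namespace SqLe

variable {L : Type*} [Lattice L] [BoundedOrder L]

theorem add {x y z w : XSpace L} (hxy : SqLe L x y) (hzw : SqLe L z w) :
    SqLe L (x + z) (y + w) := by
  have h := SqLe.add_right y hzw
  rw [add_comm z y, add_comm w y] at h
  exact (SqLe.add_right z hxy).trans h

theorem sum {ι : Type*} (s : Finset ι) {x y : ι → XSpace L}
    (h : ∀ i ∈ s, SqLe L (x i) (y i)) : SqLe L (∑ i ∈ s, x i) (∑ i ∈ s, y i) := by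
  classical
  induction s using Finset.induction_on with
  | empty => exact SqLe.refl 0
  | insert i s hi ih =>
    rw [Finset.sum_insert hi, Finset.sum_insert hi]
    exact (h i (Finset.mem_insert_self i s)).add
      (ih fun k hk => h k (Finset.mem_insert_of_mem hk))

theorem neg_le_zero {x : XSpace L} (h : SqLe L 0 x) : SqLe L (-x) 0 := by
  simpa using SqLe.add_right (-x) h

theorem le_add_of_nonneg {x y : XSpace L} (h : SqLe L 0 y) : SqLe L x (x + y) := by
  simpa using (SqLe.refl x).add h

end SqLe

def positiveCone (L : Type*) [Lattice L] [BoundedOrder L] : PointedCone ℝ (XSpace L) where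
  carrier := {x | SqLe L 0 x}
  zero_mem' := SqLe.refl 0
  add_mem' hx hy := by simpa using SqLe.add hx hy
  smul_mem' := by
    rintro ⟨c, hc⟩ x (hx : SqLe L 0 x)
    show SqLe L 0 (c • x)
    rcases hc.eq_or_lt with rfl | hc
    · simpa using SqLe.refl 0
    · simpa using SqLe.smul_pos c hc hx

section Seminorm

variable {L : Type*} [Lattice L] [BoundedOrder L]

theorem tens_eq_mkQ (a : ℝ) (A : L) : tens L a A = (deltaSpan L).mkQ (Finsupp.single A a) := rfl

theorem exists_sqLe_sum_abs_tens (x : XSpace L) :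
    ∃ (n : ℕ) (b : Fin n → ℝ) (B : Fin n → L),
      SqLe L x (∑ k, tens L |b k| (B k)) ∧ SqLe L (-x) (∑ k, tens L |b k| (B k)) := by
  obtain ⟨f, rfl⟩ := Submodule.Quotient.mk_surjective _ x
  have hf : (Submodule.Quotient.mk f : XSpace L) = ∑ A ∈ f.support, tens L (f A) A := by
    conv_lhs => rw [← f.sum_single]
    simp only [tens_eq_mkQ]
    exact map_finsuppSum (deltaSpan L).mkQ _ _
  set e := f.support.equivFin.symm
  have hsum : ∀ g : L → XSpace L, ∑ A ∈ f.support, g A = ∑ k, g (e k) := fun g => by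
    rw [← Finset.sum_coe_sort, Equiv.sum_comp e (fun A : f.support => g A)]
  refine ⟨_, fun k => f (e k), fun k => e k, ?_, ?_⟩
  · rw [hf, ← hsum (fun A => tens L |f A| A)]
    exact SqLe.sum _ fun A _ => SqLe.coeff _ _ A (le_abs_self _)
  · rw [hf, ← hsum (fun A => tens L |f A| A), ← Finset.sum_neg_distrib]
    refine SqLe.sum _ fun A _ => ?_
    rw [tens_eq_mkQ, ← map_neg, ← Finsupp.single_neg]
    exact SqLe.coeff _ _ A (neg_le_abs _)

theorem lpSeminorm_mono {φ : L → ℝ} (hφ0 : ∀ A, 0 ≤ φ A) (p : ℝ) {x y : XSpace L}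
    (hx : SqLe L 0 x) (hxy : SqLe L x y) : lpSeminorm L φ p x ≤ lpSeminorm L φ p y := by
  refine csInf_le_csInf ⟨0, ?_⟩ ?_ ?_
  · rintro r ⟨n, b, B, -, -, rfl⟩
    exact Real.rpow_nonneg (Finset.sum_nonneg fun k _ =>
      mul_nonneg (Real.rpow_nonneg (abs_nonneg _) _) (hφ0 _)) _
  · obtain ⟨n, b, B, hy, hny⟩ := exists_sqLe_sum_abs_tens y
    exact ⟨_, n, b, B, hy, hny, rfl⟩
  · rintro r ⟨n, b, B, hy, -, hr⟩
    have hxS := hxy.trans hy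
    exact ⟨n, b, B, hxS, hx.neg_le_zero.trans (hx.trans hxS), hr⟩

end Seminorm

theorem norm_le_norm_add_of_mem_closure {E : Type*} [SeminormedAddCommGroup E] {S : Set E}
    (hS : ∀ u ∈ S, ∀ w ∈ S, ‖u‖ ≤ ‖u + w‖) {u w : E} (hu : u ∈ closure S)
    (hw : w ∈ closure S) : ‖u‖ ≤ ‖u + w‖ := by
  have hclosed : IsClosed {q : E × E | ‖q.1‖ ≤ ‖q.1 + q.2‖} :=
    isClosed_le (by fun_prop) (by fun_prop)
  have hprod : closure (S ×ˢ S) ⊆ {q : E × E | ‖q.1‖ ≤ ‖q.1 + q.2‖} :=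
    closure_minimal (fun q hq => hS _ hq.1 _ hq.2) hclosed
  exact hprod (show (u, w) ∈ closure (S ×ˢ S) by rw [closure_prod_eq]; exact ⟨hu, hw⟩)

theorem lp_space_ordered_vector_space_general {L : Type*} [Lattice L] [BoundedOrder L]
    (φ : L → ℝ)
    (hφ0 : ∀ A, 0 ≤ φ A)
    (p : ℝ)
    (E : Type*) [NormedAddCommGroup E] [NormedSpace ℝ E]
    (j : XSpace L →ₗ[ℝ] E)
    (hj : ∀ x : XSpace L, ‖j x‖ = lpSeminorm L φ p x) :
    ∀ le : E → E → Prop,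
      (∀ x y : E, le x y ↔ y - x ∈ closure (⇑j '' {z : XSpace L | SqLe L 0 z})) →
      (∀ x : E, le x x) ∧
      (∀ x y z : E, le x y → le y z → le x z) ∧
      (∀ x y : E, le x y → le y x → x = y) ∧
      (∀ x y z : E, le x y → le (x + z) (y + z)) ∧
      (∀ (a : ℝ) (x : E), 0 ≤ a → le 0 x → le 0 (a • x)) ∧
      (∀ x y : E, le 0 x → le x y → ‖x‖ ≤ ‖y‖) := by
  intro le hle
  set C : PointedCone ℝ E := ((positiveCone L).map j).closure
  replace hle : ∀ x y, le x y ↔ y - x ∈ C := hle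
  have hnorm : ∀ u ∈ C, ∀ w ∈ C, ‖u‖ ≤ ‖u + w‖ := by
    refine fun u hu w hw => norm_le_norm_add_of_mem_closure (S := j '' positiveCone L) ?_ hu hw
    rintro _ ⟨u, hu, rfl⟩ _ ⟨w, hw, rfl⟩
    rw [← map_add, hj, hj]
    exact lpSeminorm_mono hφ0 p hu (SqLe.le_add_of_nonneg hw)
  simp only [hle, sub_zero]
  refine ⟨fun x => ?_, fun x y z hxy hyz => ?_, fun x y hxy hyx => ?_, fun x y z hxy => ?_,
    fun a x ha hx => C.smul_mem ha hx, fun x y hx hxy => ?_⟩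
  · simp
  · simpa using C.add_mem hyz hxy
  · simpa [sub_eq_zero, eq_comm] using hnorm _ hxy _ hyx
  · simp [hxy]
  · simpa using hnorm _ hx _ hxy

/-- Let `L` be a bounded lattice, `φ : L → [0,1]` an order-preserving
submeasure and `1 ≤ p < ∞`. In any realization of `L^p(L, φ)` — i.e. a complete normed
space `E` together with a linear map `j` from `X` whose norm is the `L^p(L,φ)`-seminorm
(so that `E` is the completion of `X/ker‖·‖`) — the order `x ≤ y ↔ y − x ∈ C₊` defined
by the closed cone `C₊ = closure (j '' {x : 0 ⊑ x})` makes `E` a partially ordered vector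
space (reflexive, transitive, antisymmetric, translation invariant, and invariant under
multiplication by nonnegative scalars), and `0 ≤ x ≤ y` implies `‖x‖ ≤ ‖y‖`. -/
theorem lp_space_ordered_vector_space {L : Type*} [Lattice L] [BoundedOrder L]
    (φ : L → ℝ) (hmono : Monotone φ)
    (hφ0 : ∀ A, 0 ≤ φ A) (hφ1 : ∀ A, φ A ≤ 1)
    (hbot : φ ⊥ = 0) (htop : φ ⊤ = 1)
    (hsub : ∀ A B : L, φ (A ⊔ B) ≤ φ A + φ B)
    (p : ℝ) (hp : 1 ≤ p)
    (E : Type*) [NormedAddCommGroup E] [NormedSpace ℝ E] [CompleteSpace E]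
    (j : XSpace L →ₗ[ℝ] E)
    (hj : ∀ x : XSpace L, ‖j x‖ = lpSeminorm L φ p x)
    (hdense : DenseRange ⇑j) :
    ∀ le : E → E → Prop,
      (∀ x y : E, le x y ↔ y - x ∈ closure (⇑j '' {z : XSpace L | SqLe L 0 z})) →
      (∀ x : E, le x x) ∧
      (∀ x y z : E, le x y → le y z → le x z) ∧
      (∀ x y : E, le x y → le y x → x = y) ∧
      (∀ x y z : E, le x y → le (x + z) (y + z)) ∧
      (∀ (a : ℝ) (x : E), 0 ≤ a → le 0 x → le 0 (a • x)) ∧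
      (∀ x y : E, le 0 x → le x y → ‖x‖ ≤ ‖y‖) :=
  lp_space_ordered_vector_space_general φ hφ0 p E j hj
end
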